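/- Let L be a complex Lie algebra and r ∈ Im(1−τ) ⊆ L⊗L. Then (1+ξ+ξ²)∘(1⊗Δ_r)∘Δ_r(x) = x·c(r) for all x ∈ L, and the triple (L, [·,·], Δ_r) is a Lie bialgebra if and only if r satisfies the modified classical Yang-Baxter equation x·c(r) = 0 for all x ∈ L. -/
import Mathlib


open scoped TensorProduct

noncomputable section

section Generic

variable (L : Type*) [LieRing L] [LieAlgebra ℂ L]

/-- The twist map `τ : a⊗b ↦ b⊗a` of `L ⊗ L`. -/
def tau : L ⊗[ℂ] L →ₗ[ℂ] L ⊗[ℂ] L := (TensorProduct.comm ℂ L L).toLinearMap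

/-- The cyclic map `ξ : x₁⊗x₂⊗x₃ ↦ x₂⊗x₃⊗x₁` of `L ⊗ L ⊗ L`. -/
def xi : L ⊗[ℂ] (L ⊗[ℂ] L) →ₗ[ℂ] L ⊗[ℂ] (L ⊗[ℂ] L) :=
  (TensorProduct.assoc ℂ L L L).toLinearMap ∘ₗ (TensorProduct.comm ℂ L (L ⊗[ℂ] L)).toLinearMap

/-- The coboundary `Δ_r : x ↦ x·r` of `r ∈ L ⊗ L`, where `L ⊗ L` carries the diagonal
adjoint action. -/
def DeltaR (r : L ⊗[ℂ] L) : L →ₗ[ℂ] L ⊗[ℂ] L where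
  toFun x := ⁅x, r⁆
  map_add' x y := by simp [add_lie]
  map_smul' c x := by simp [smul_lie]

/-- For a representation `r = Σᵢ aᵢ⊗bᵢ`, the element
`c(r) = Σ_{i,j} [aᵢ,aⱼ]⊗bᵢ⊗bⱼ + Σ_{i,j} aᵢ⊗[bᵢ,aⱼ]⊗bⱼ + Σ_{i,j} aᵢ⊗aⱼ⊗[bᵢ,bⱼ]`. -/
def cyb {k : ℕ} (a b : Fin k → L) : L ⊗[ℂ] (L ⊗[ℂ] L) :=
  ∑ i, ∑ j,
    (⁅a i, a j⁆ ⊗ₜ[ℂ] (b i ⊗ₜ[ℂ] b j) + a i ⊗ₜ[ℂ] (⁅b i, a j⁆ ⊗ₜ[ℂ] b j)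
      + a i ⊗ₜ[ℂ] (a j ⊗ₜ[ℂ] ⁅b i, b j⁆))

/-- The map `1 + ξ + ξ²` on `L ⊗ L ⊗ L`. -/
def cycSum : L ⊗[ℂ] (L ⊗[ℂ] L) →ₗ[ℂ] L ⊗[ℂ] (L ⊗[ℂ] L) :=
  LinearMap.id + xi L + xi L ∘ₗ xi L

/-- `(L, [·,·], Δ)` is a Lie bialgebra: `Im Δ ⊆ Im(1−τ)`, the co-Jacobi identity
`(1+ξ+ξ²)∘(1⊗Δ)∘Δ = 0` holds, and `Δ` is a 1-cocycle: `Δ[x,y] = x·Δy − y·Δx`. -/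
def IsLieBialgebra (Δ : L →ₗ[ℂ] L ⊗[ℂ] L) : Prop :=
  (∀ x : L, Δ x ∈ LinearMap.range (LinearMap.id - tau L)) ∧
  (∀ x : L, cycSum L (TensorProduct.map LinearMap.id Δ (Δ x)) = 0) ∧
  (∀ x y : L, Δ ⁅x, y⁆ = ⁅x, Δ y⁆ - ⁅y, Δ x⁆)

/-- `φ : L →ₗ M` is a derivation of the Lie algebra `L` with values in the `L`-module `M`. -/
def IsDer {M : Type*} [AddCommGroup M] [Module ℂ M]
    [LieRingModule L M] (φ : L →ₗ[ℂ] M) : Prop :=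
  ∀ x y : L, φ ⁅x, y⁆ = ⁅x, φ y⁆ - ⁅y, φ x⁆

end Generic


section Aux

variable (L : Type*) [LieRing L] [LieAlgebra ℂ L]

/-- The Lie bracket as a linear map `L ⊗ L → L`. -/
def brk : L ⊗[ℂ] L →ₗ[ℂ] L :=
  TensorProduct.lift (LinearMap.mk₂ ℂ (fun x y => ⁅x, y⁆) add_lie smul_lie lie_add lie_smul)

def t1 : (L ⊗[ℂ] L) ⊗[ℂ] (L ⊗[ℂ] L) →ₗ[ℂ] L ⊗[ℂ] (L ⊗[ℂ] L) :=
  TensorProduct.map (brk L) LinearMap.id ∘ₗ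
    (TensorProduct.tensorTensorTensorComm ℂ L L L L).toLinearMap

def t2 : (L ⊗[ℂ] L) ⊗[ℂ] (L ⊗[ℂ] L) →ₗ[ℂ] L ⊗[ℂ] (L ⊗[ℂ] L) :=
  TensorProduct.map LinearMap.id
      (TensorProduct.map (brk L) LinearMap.id ∘ₗ (TensorProduct.assoc ℂ L L L).symm.toLinearMap)
    ∘ₗ (TensorProduct.assoc ℂ L L (L ⊗[ℂ] L)).toLinearMap

def t3 : (L ⊗[ℂ] L) ⊗[ℂ] (L ⊗[ℂ] L) →ₗ[ℂ] L ⊗[ℂ] (L ⊗[ℂ] L) :=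
  TensorProduct.map LinearMap.id
      (TensorProduct.map LinearMap.id (brk L) ∘ₗ (TensorProduct.leftComm ℂ L L L).toLinearMap)
    ∘ₗ (TensorProduct.assoc ℂ L L (L ⊗[ℂ] L)).toLinearMap

/-- The bilinear map with `B(p⊗q, a⊗b) = p⊗⁅q,a⁆⊗b + p⊗a⊗⁅q,b⁆`, packaged on the tensor
square, so that `(1 ⊗ Δ_v)(u) = B(u ⊗ v)`. -/
def Bm : (L ⊗[ℂ] L) ⊗[ℂ] (L ⊗[ℂ] L) →ₗ[ℂ] L ⊗[ℂ] (L ⊗[ℂ] L) := t2 L + t3 L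

/-- The bilinear map with `C(p⊗q, a⊗b) = ⁅p,a⁆⊗q⊗b + p⊗⁅q,a⁆⊗b + p⊗a⊗⁅q,b⁆`, so that
`c(r) = C(r ⊗ r)`. -/
def Cm : (L ⊗[ℂ] L) ⊗[ℂ] (L ⊗[ℂ] L) →ₗ[ℂ] L ⊗[ℂ] (L ⊗[ℂ] L) := t1 L + t2 L + t3 L

/-- The antisymmetrization `1 - τ`. -/
def Am : L ⊗[ℂ] L →ₗ[ℂ] L ⊗[ℂ] L := LinearMap.id - tau L

lemma Bm_tmul (p q a b : L) :
    Bm L ((p ⊗ₜ[ℂ] q) ⊗ₜ[ℂ] (a ⊗ₜ[ℂ] b)) =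
      p ⊗ₜ[ℂ] (⁅q, a⁆ ⊗ₜ[ℂ] b) + p ⊗ₜ[ℂ] (a ⊗ₜ[ℂ] ⁅q, b⁆) := by
  simp [Bm, t2, t3, brk, TensorProduct.leftComm]

lemma Cm_tmul (p q a b : L) :
    Cm L ((p ⊗ₜ[ℂ] q) ⊗ₜ[ℂ] (a ⊗ₜ[ℂ] b)) =
      ⁅p, a⁆ ⊗ₜ[ℂ] (q ⊗ₜ[ℂ] b) + p ⊗ₜ[ℂ] (⁅q, a⁆ ⊗ₜ[ℂ] b) + p ⊗ₜ[ℂ] (a ⊗ₜ[ℂ] ⁅q, b⁆) := by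
  simp [Cm, t1, t2, t3, brk, TensorProduct.leftComm, TensorProduct.tensorTensorTensorComm]

lemma xi_tmul (x y z : L) : xi L (x ⊗ₜ[ℂ] (y ⊗ₜ[ℂ] z)) = y ⊗ₜ[ℂ] (z ⊗ₜ[ℂ] x) := by
  simp [xi]

/-- `(1 ⊗ Δ_v)(u) = B(u ⊗ v)`. -/
lemma Bm_eq (u v : L ⊗[ℂ] L) :
    TensorProduct.map LinearMap.id (DeltaR L v) u = Bm L (u ⊗ₜ[ℂ] v) := by
  induction u with
  | zero => simp
  | add u u' h h' => simp [TensorProduct.add_tmul, h, h']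
  | tmul p q =>
    induction v with
    | zero => simp [DeltaR]
    | add v v' h h' =>
      have hD : DeltaR L (v + v') = DeltaR L v + DeltaR L v' := by
        ext x; simp [DeltaR, lie_add]
      rw [hD, TensorProduct.map_add_right, TensorProduct.tmul_add, map_add,
        LinearMap.add_apply, h, h']
    | tmul a b =>
      simp [DeltaR, Bm_tmul, TensorProduct.tmul_add]

/-- `τ` is equivariant for the adjoint action. -/
lemma tau_lie (x : L) (u : L ⊗[ℂ] L) : tau L ⁅x, u⁆ = ⁅x, tau L u⁆ := by
  induction u with
  | zero => simp
  | add u u' h h' => simp [lie_add, h, h']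
  | tmul a b => simp [tau, lie_add]; abel

/-- `C` is equivariant for the adjoint actions (Leibniz rule). -/
lemma Cm_leibniz (x : L) (u v : L ⊗[ℂ] L) :
    ⁅x, Cm L (u ⊗ₜ[ℂ] v)⁆ = Cm L (⁅x, u⁆ ⊗ₜ[ℂ] v) + Cm L (u ⊗ₜ[ℂ] ⁅x, v⁆) := by
  induction u with
  | zero => simp
  | add u u' h h' =>
    simp only [TensorProduct.add_tmul, map_add, lie_add, add_lie, h, h']
    abel
  | tmul p q =>
    induction v with
    | zero => simp
    | add v v' h h' =>
      simp only [TensorProduct.tmul_add, map_add, lie_add, h, h']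
      abel
    | tmul a b =>
      rw [Cm_tmul]
      simp only [lie_add, TensorProduct.LieModule.lie_tmul_right, TensorProduct.add_tmul,
        TensorProduct.tmul_add, map_add, Cm_tmul]
      rw [leibniz_lie x p a, leibniz_lie x q a, leibniz_lie x q b]
      simp only [TensorProduct.add_tmul, TensorProduct.tmul_add]
      abel

/-- The key identity: on antisymmetrized tensors,
`(1+ξ+ξ²)(B(u ⊗ v)) = C(u ⊗ v) + C(v ⊗ u)`. -/
lemma key (u v : L ⊗[ℂ] L) :
    cycSum L (Bm L ((Am L u) ⊗ₜ[ℂ] (Am L v))) =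
      Cm L ((Am L u) ⊗ₜ[ℂ] (Am L v)) + Cm L ((Am L v) ⊗ₜ[ℂ] (Am L u)) := by
  induction u with
  | zero => simp
  | add u u' h h' =>
    simp only [map_add, TensorProduct.add_tmul, TensorProduct.tmul_add] at *
    rw [h, h']; abel
  | tmul p q =>
    induction v with
    | zero => simp
    | add v v' h h' =>
      simp only [map_add, TensorProduct.add_tmul, TensorProduct.tmul_add] at *
      rw [h, h']; abel
    | tmul a b =>
      simp only [Am, LinearMap.sub_apply, LinearMap.id_apply, tau, LinearEquiv.coe_coe,
        TensorProduct.comm_tmul, TensorProduct.sub_tmul, TensorProduct.tmul_sub, map_sub,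
        Bm_tmul, Cm_tmul, cycSum, LinearMap.add_apply, LinearMap.comp_apply,
        map_add, xi_tmul]
      rw [← lie_skew a p, ← lie_skew a q, ← lie_skew b p, ← lie_skew b q]
      simp only [TensorProduct.neg_tmul, TensorProduct.tmul_neg]
      abel

end Aux

/-- STATEMENT 3: For a complex Lie algebra `L` and `r ∈ Im(1−τ) ⊆ L⊗L` (written
`r = Σᵢ aᵢ⊗bᵢ`), we have `(1+ξ+ξ²)∘(1⊗Δ_r)∘Δ_r(x) = x·c(r)` for all `x ∈ L`, and
`(L, [·,·], Δ_r)` is a Lie bialgebra if and only if `r` satisfies the modified classical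
Yang-Baxter equation `x·c(r) = 0` for all `x ∈ L`. -/
theorem stmt3 (L : Type*) [LieRing L] [LieAlgebra ℂ L] (r : L ⊗[ℂ] L)
    (hr : r ∈ LinearMap.range (LinearMap.id - tau L))
    (k : ℕ) (a b : Fin k → L) (hrep : r = ∑ i, a i ⊗ₜ[ℂ] b i) :
    (∀ x : L, cycSum L (TensorProduct.map LinearMap.id (DeltaR L r) (DeltaR L r x))
        = ⁅x, cyb L a b⁆) ∧
    (IsLieBialgebra L (DeltaR L r) ↔ ∀ x : L, ⁅x, cyb L a b⁆ = 0) := by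
  obtain ⟨s, hs⟩ := hr
  have hAs : Am L s = r := hs
  have hrx : ∀ x : L, DeltaR L r x = Am L ⁅x, s⁆ := by
    intro x
    have : DeltaR L r x = ⁅x, Am L s⁆ := by rw [hAs]; rfl
    rw [this]
    simp only [Am, LinearMap.sub_apply, LinearMap.id_apply, lie_sub, tau_lie]
  have hC : Cm L (r ⊗ₜ[ℂ] r) = cyb L a b := by
    rw [hrep, TensorProduct.sum_tmul, map_sum]
    simp only [TensorProduct.tmul_sum, map_sum, Cm_tmul, cyb]
  have part1 : ∀ x : L,
      cycSum L (TensorProduct.map LinearMap.id (DeltaR L r) (DeltaR L r x))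
        = ⁅x, cyb L a b⁆ := by
    intro x
    rw [Bm_eq, hrx x, ← hAs, key, hAs, ← hrx x, ← hC, Cm_leibniz]
    have hx : (⁅x, r⁆ : L ⊗[ℂ] L) = DeltaR L r x := rfl
    rw [hx]
  refine ⟨part1, ?_, ?_⟩
  · intro h x
    rw [← part1 x]
    exact h.2.1 x
  · intro h
    refine ⟨fun x => ⟨⁅x, s⁆, (hrx x).symm⟩, fun x => (part1 x).trans (h x), ?_⟩
    intro x y
    show (⁅⁅x, y⁆, r⁆ : L ⊗[ℂ] L) = ⁅x, DeltaR L r y⁆ - ⁅y, DeltaR L r x⁆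
    have : DeltaR L r x = ⁅x, r⁆ := rfl
    have h2 : DeltaR L r y = ⁅y, r⁆ := rfl
    rw [this, h2, leibniz_lie x y r]
    abel
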